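/- arXiv:1810.09680 — 2 statements merged into one kernel-verified Lean document; each statement's English description precedes it below -/
import Mathlib

section
/- The splitting number s has uncountable cofinality. -/
open Set Filter

def Splits (S X : Set ℕ) : Prop := (X ∩ S).Infinite ∧ (X \ S).Infinite

def SplittingFam (S : Set (Set ℕ)) : Prop :=
  (∀ s ∈ S, s.Infinite) ∧ ∀ X : Set ℕ, X.Infinite → ∃ s ∈ S, Splits s X

noncomputable def sCard : Cardinal :=
  sInf {c : Cardinal | ∃ S : Set (Set ℕ), SplittingFam S ∧ Cardinal.mk S = c}

/-!
If `cof 𝔰 = ω`, a splitting family of size `𝔰` is a countable union of subfamilies `F n` of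
size `< 𝔰`. A family of size `< 𝔰` fails to split some infinite subset of any given infinite set
(pull it back along an enumeration of that set), so there is a decreasing chain `Y 0 ⊇ Y 1 ⊇ ⋯`
of infinite sets with no member of `F n` splitting `Y n`. A pseudo-intersection `X` of the chain is
then split by no member of the family at all, since whatever splits `X ⊆* Y n` also splits `Y n`.
-/

open scoped Cardinal

namespace Splits

variable {A X Y : Set ℕ}

lemma infinite_left (h : Splits A X) : A.Infinite :=
  h.1.mono inter_subset_right

lemma mono_of_finite_diff (h : Splits A X) (hXY : (X \ Y).Finite) : Splits A Y := by
  refine ⟨(h.1.sdiff hXY).mono ?_, (h.2.sdiff hXY).mono ?_⟩ <;>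
    exact fun x ⟨⟨hxX, hxA⟩, hxXY⟩ => ⟨not_not.1 fun hxY => hxXY ⟨hxX, hxY⟩, hxA⟩

end Splits

lemma splits_image_iff {f : ℕ → ℕ} (hf : Function.Injective f) {A W : Set ℕ} :
    Splits A (f '' W) ↔ Splits (f ⁻¹' A) W := by
  rw [Splits, Splits, ← image_inter_preimage, ← image_sdiff_preimage,
    infinite_image_iff hf.injOn, infinite_image_iff hf.injOn]

lemma splits_setOf_even_univ : Splits {n | Even n} univ := by
  rw [Splits, univ_inter, ← compl_eq_univ_sdiff]
  exact ⟨infinite_of_forall_exists_gt fun n => ⟨2 * n + 2, by simp [parity_simps], by omega⟩,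
    infinite_of_forall_exists_gt fun n => ⟨2 * n + 1, by simp [parity_simps], by omega⟩⟩

lemma Set.Infinite.exists_injective_range_eq {Y : Set ℕ} (hY : Y.Infinite) :
    ∃ f : ℕ → ℕ, Function.Injective f ∧ range f = Y :=
  ⟨Nat.nth (· ∈ Y), Nat.nth_injective hY, Nat.range_nth_of_infinite hY⟩

lemma exists_infinite_splits {X : Set ℕ} (hX : X.Infinite) :
    ∃ A : Set ℕ, A.Infinite ∧ Splits A X := by
  obtain ⟨f, hf, rfl⟩ := hX.exists_injective_range_eq
  refine ⟨f '' {n | Even n}, splits_setOf_even_univ.infinite_left.image hf.injOn, ?_⟩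
  rw [← image_univ, splits_image_iff hf, preimage_image_eq _ hf]
  exact splits_setOf_even_univ

lemma splittingFam_setOf_infinite : SplittingFam {A : Set ℕ | A.Infinite} :=
  ⟨fun _ hA => hA, fun _ hX => exists_infinite_splits hX⟩

lemma exists_infinite_forall_not_splits_of_finite {S : Set (Set ℕ)} (hS : S.Finite) :
    ∃ X : Set ℕ, X.Infinite ∧ ∀ A ∈ S, ¬ Splits A X := by
  have := hS.to_subtype
  -- Some infinite class of numbers has the same membership pattern in all members of `S`.
  obtain ⟨pattern, hpattern⟩ := Finite.exists_infinite_fiber fun n (A : S) => n ∈ A.1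
  refine ⟨_, infinite_coe_iff.1 hpattern, fun A hA hsplit => ?_⟩
  have hfiber :
      ∀ n ∈ (fun n (A : S) => n ∈ A.1) ⁻¹' {pattern}, (n ∈ A ↔ pattern ⟨A, hA⟩) :=
    fun n hn => iff_of_eq (congrFun (mem_singleton_iff.1 hn) ⟨A, hA⟩)
  by_cases hmem : pattern ⟨A, hA⟩
  · exact hsplit.2 (finite_empty.subset fun n hn => hn.2 ((hfiber n hn.1).2 hmem))
  · exact hsplit.1 (finite_empty.subset fun n hn => hmem ((hfiber n hn.1).1 hn.2))

lemma nonempty_splittingFam_cards :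
    {c : Cardinal | ∃ S : Set (Set ℕ), SplittingFam S ∧ #S = c}.Nonempty :=
  ⟨_, _, splittingFam_setOf_infinite, rfl⟩

lemma exists_splittingFam_mk_eq_sCard : ∃ S : Set (Set ℕ), SplittingFam S ∧ #S = sCard :=
  csInf_mem nonempty_splittingFam_cards

lemma aleph0_le_sCard : ℵ₀ ≤ sCard := by
  refine le_csInf nonempty_splittingFam_cards ?_
  rintro _ ⟨S, hS, rfl⟩
  by_contra! hfin
  obtain ⟨X, hX, hXS⟩ :=
    exists_infinite_forall_not_splits_of_finite (Cardinal.lt_aleph0_iff_set_finite.1 hfin)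
  obtain ⟨A, hA, hAX⟩ := hS.2 X hX
  exact hXS A hA hAX

lemma exists_infinite_forall_not_splits_of_mk_lt_sCard {F : Set (Set ℕ)}
    (hF : #F < sCard) : ∃ X : Set ℕ, X.Infinite ∧ ∀ A ∈ F, ¬ Splits A X := by
  by_contra! hsplit
  have hfam : SplittingFam {A ∈ F | A.Infinite} := by
    refine ⟨fun A hA => hA.2, fun X hX => ?_⟩
    obtain ⟨A, hA, hAX⟩ := hsplit X hX
    exact ⟨A, ⟨hA, hAX.infinite_left⟩, hAX⟩
  have := csInf_le' (s := {c | ∃ S : Set (Set ℕ), SplittingFam S ∧ #S = c}) ⟨_, hfam, rfl⟩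
  exact (this.trans_lt ((Cardinal.mk_le_mk_of_subset (sep_subset _ _)).trans_lt hF)).false

lemma exists_infinite_subset_forall_not_splits_of_mk_lt_sCard {F : Set (Set ℕ)}
    (hF : #F < sCard) {Y : Set ℕ} (hY : Y.Infinite) :
    ∃ X ⊆ Y, X.Infinite ∧ ∀ A ∈ F, ¬ Splits A X := by
  obtain ⟨f, hf, rfl⟩ := hY.exists_injective_range_eq
  obtain ⟨W, hW, hWF⟩ := exists_infinite_forall_not_splits_of_mk_lt_sCard
    (Cardinal.mk_image_le.trans_lt hF : #(preimage f '' F) < sCard)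
  refine ⟨f '' W, image_subset_range f W, hW.image hf.injOn, fun A hA => ?_⟩
  rw [splits_image_iff hf]
  exact hWF _ (mem_image_of_mem _ hA)

lemma Cardinal.exists_iUnion_eq_univ_mk_lt_of_cof_le_aleph0 {α : Type*}
    (hα : ℵ₀ ≤ #α) (hcof : (#α).ord.cof ≤ ℵ₀) :
    ∃ F : ℕ → Set α, (⋃ n, F n) = Set.univ ∧ ∀ n, #(F n) < #α := by
  set β := (#α).ord.ToType
  have hβ : #β = #α := Cardinal.mk_ord_toType _
  obtain ⟨e⟩ := Cardinal.eq.1 hβ.symm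
  obtain ⟨T, hT, hTmk⟩ := Order.exists_cof_eq β
  rw [Ordinal.cof_toType] at hTmk
  have : Countable T := Cardinal.mk_le_aleph0_iff.1 (hTmk ▸ hcof)
  have : Infinite α := Cardinal.infinite_iff.2 hα
  have : Nonempty T := by
    obtain ⟨b, hb, -⟩ := hT (e (Classical.arbitrary α))
    exact ⟨⟨b, hb⟩⟩
  obtain ⟨g, hg⟩ := exists_surjective_nat T
  refine ⟨fun n => e ⁻¹' Iic (g n), eq_univ_of_forall fun a => ?_, fun n => ?_⟩
  · obtain ⟨b, hb, hab⟩ := hT (e a)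
    obtain ⟨n, hn⟩ := hg ⟨b, hb⟩
    exact mem_iUnion.2 ⟨n, by rwa [mem_preimage, mem_Iic, hn]⟩
  · rw [Cardinal.mk_preimage_equiv]
    exact (Cardinal.mk_Iic_lt _ (by rw [hβ, Ordinal.type_toType]) (hβ.symm ▸ hα)).trans_eq hβ

lemma exists_antitone_of_forall_exists_subset {α : Type*} {p : Set α → Prop}
    {q : ℕ → Set α → Prop} (hp : p univ) (step : ∀ n Y, p Y → ∃ X ⊆ Y, p X ∧ q n X) :
    ∃ Y : ℕ → Set α, Antitone Y ∧ ∀ n, p (Y n) ∧ q n (Y n) := by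
  choose next next_subset next_p next_q using step
  let Z : ℕ → {Y // p Y} := fun n =>
    Nat.rec ⟨univ, hp⟩ (fun n Y => ⟨next n Y.1 Y.2, next_p n Y.1 Y.2⟩) n
  refine ⟨fun n => (Z (n + 1)).1, antitone_nat_of_succ_le fun n => next_subset _ _ _,
    fun n => ⟨(Z (n + 1)).2, next_q n _ _⟩⟩

lemma exists_infinite_forall_finite_diff_of_antitone {Y : ℕ → Set ℕ} (hY : Antitone Y)
    (hinf : ∀ n, (Y n).Infinite) : ∃ X : Set ℕ, X.Infinite ∧ ∀ n, (X \ Y n).Finite := by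
  choose a ha_mem ha_gt using fun n => (hinf n).exists_gt n
  refine ⟨range a, infinite_of_forall_exists_gt fun n => ⟨a n, mem_range_self n, ha_gt n⟩,
    fun n => ((finite_Iio n).image a).subset ?_⟩
  rintro _ ⟨⟨k, rfl⟩, hk⟩
  refine ⟨k, mem_Iio.2 (lt_of_not_ge fun hnk => hk (hY hnk (ha_mem k))), rfl⟩

/-- The splitting number `𝔰` has uncountable cofinality. -/
theorem s_has_uncountable_cofinality : Cardinal.aleph0 < (sCard.ord).cof := by
  by_contra! hcof
  obtain ⟨S, hS, hSmk⟩ := exists_splittingFam_mk_eq_sCard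
  obtain ⟨F, hFcover, hFsmall⟩ := Cardinal.exists_iUnion_eq_univ_mk_lt_of_cof_le_aleph0
    (hSmk ▸ aleph0_le_sCard) (hSmk ▸ hcof)
  obtain ⟨Y, hYanti, hY⟩ := exists_antitone_of_forall_exists_subset infinite_univ
    fun n Y hY => exists_infinite_subset_forall_not_splits_of_mk_lt_sCard
      (Cardinal.mk_image_le.trans_lt (hSmk ▸ hFsmall n) : #(Subtype.val '' F n) < sCard) hY
  obtain ⟨X, hX, hXY⟩ :=
    exists_infinite_forall_finite_diff_of_antitone hYanti fun n => (hY n).1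
  obtain ⟨A, hAS, hAX⟩ := hS.2 X hX
  obtain ⟨n, hn⟩ := mem_iUnion.1 (hFcover ▸ mem_univ (⟨A, hAS⟩ : S))
  exact (hY n).2 A ⟨⟨A, hAS⟩, hn, rfl⟩ (hAX.mono_of_finite_diff (hXY n))
end

section
/- If non(M) = ω₁, then there exists a family X = {f_α : α < ω₁} ⊆ ω^ω such that for every g : ω → ω there is α < ω₁ such that for all β > α the set {n : f_β(n) = g(n)} is infinite (an IE-Luzin set). -/
open Set Filter

/-!
Enumerate a non-meagre set `S` of size `ℵ₁` as `x_α`, `α < ω₁`. Each `β < ω₁` has only countably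
many predecessors, so `f_β` can copy the `k`-th of them on the `k`-th column `{n | n.unpair.1 = k}`.
For a fixed `g`, the functions agreeing with `g` infinitely often on every column form a comeagre
set, which therefore contains some `x_α`; then every `f_β` with `β > α` copies `x_α` on some column.
-/

/-- `non(M)`: the least cardinality of a non-meager subset of the Baire space. -/
noncomputable def nonMeagerCard : Cardinal :=
  sInf {c : Cardinal | ∃ S : Set (ℕ → ℕ), ¬ IsMeagre S ∧ Cardinal.mk S = c}

theorem inter_nonempty_of_not_isMeagre_of_mem_residual {X : Type*} [TopologicalSpace X]
    {s t : Set X} (hs : ¬ IsMeagre s) (ht : t ∈ residual X) : (s ∩ t).Nonempty := by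
  by_contra hst
  exact hs (mem_of_superset ht fun x hxt hxs => hst ⟨x, hxs, hxt⟩)

section Agreement

variable {X : Type*} [TopologicalSpace X]

theorem isOpen_setOf_exists_gt_eq [DiscreteTopology X] (g : ℕ → X) (A : Set ℕ) (m : ℕ) :
    IsOpen {f : ℕ → X | ∃ n ∈ A, m < n ∧ f n = g n} := by
  have hunion : {f : ℕ → X | ∃ n ∈ A, m < n ∧ f n = g n} =
      ⋃ n ∈ A ∩ Ioi m, (fun f => f n) ⁻¹' {g n} := by
    ext f
    simp [and_assoc]
  rw [hunion]
  exact isOpen_biUnion fun n _ => (continuous_apply n).isOpen_preimage _ (isOpen_discrete _)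

theorem dense_setOf_exists_gt_eq (g : ℕ → X) {A : Set ℕ} (hA : A.Infinite) (m : ℕ) :
    Dense {f : ℕ → X | ∃ n ∈ A, m < n ∧ f n = g n} := by
  choose n hnA hn using fun k : ℕ => hA.exists_gt (max m k)
  intro f
  refine mem_closure_of_tendsto (b := atTop) (f := fun k => Function.update f (n k) (g (n k))) ?_
    (Eventually.of_forall fun k => ⟨n k, hnA k, (le_max_left m k).trans_lt (hn k), by simp⟩)
  refine tendsto_pi_nhds.mpr fun i => tendsto_const_nhds.congr' ?_
  filter_upwards [eventually_ge_atTop i] with k hik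
  exact (Function.update_of_ne ((hik.trans (le_max_right m k)).trans_lt (hn k)).ne _ _).symm

theorem setOf_infinite_eq_mem_residual [DiscreteTopology X] (g : ℕ → X) {A : Set ℕ}
    (hA : A.Infinite) : {f : ℕ → X | {n ∈ A | f n = g n}.Infinite} ∈ residual (ℕ → X) := by
  refine mem_of_superset (countable_iInter_mem.mpr fun m =>
    residual_of_dense_open (isOpen_setOf_exists_gt_eq g A m) (dense_setOf_exists_gt_eq g hA m)) ?_
  intro f hf
  exact infinite_of_forall_exists_gt fun m =>
    (mem_iInter.mp hf m).imp fun _ ⟨hnA, hmn, hfg⟩ => ⟨⟨hnA, hfg⟩, hmn⟩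

end Agreement

theorem Nat.infinite_setOf_unpair_fst_eq (k : ℕ) : {n : ℕ | n.unpair.1 = k}.Infinite :=
  infinite_of_injective_forall_mem (fun _ _ h => (Nat.pair_eq_pair.mp h).2)
    fun m : ℕ => show (Nat.pair k m).unpair.1 = k by simp

theorem exists_forall_le_infinite_eq_of_not_isMeagre_range {X T : Type*} [TopologicalSpace X]
    [DiscreteTopology X] [Preorder T] (x : T → ℕ → X) (hx : ¬ IsMeagre (range x))
    (hT : ∀ β : T, (Iic β).Countable) :
    ∃ F : T → ℕ → X, ∀ g : ℕ → X, ∃ α, ∀ β, α ≤ β → {n | F β n = g n}.Infinite := by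
  choose e he using fun β => (hT β).exists_surjective (nonempty_Iic (a := β))
  refine ⟨fun β n => x (e β n.unpair.1) n, fun g => ?_⟩
  obtain ⟨_, ⟨α, rfl⟩, hα⟩ := inter_nonempty_of_not_isMeagre_of_mem_residual hx
    (countable_iInter_mem.mpr fun k =>
      setOf_infinite_eq_mem_residual g (Nat.infinite_setOf_unpair_fst_eq k))
  refine ⟨α, fun β hαβ => ?_⟩
  obtain ⟨k, hk⟩ := he β ⟨α, hαβ⟩
  refine (mem_iInter.mp hα k).mono fun n hn => ?_
  obtain ⟨hnk : n.unpair.1 = k, hxg⟩ := hn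
  show x (e β n.unpair.1) n = g n
  rw [hnk, hk, hxg]

theorem Cardinal.countable_Iic_aleph_one_ord_toType (β : (Cardinal.aleph 1).ord.ToType) :
    (Iic β).Countable := by
  rw [← Iio_insert]
  refine (le_aleph0_iff_set_countable.mp (lt_aleph_one_iff.mp ?_)).insert β
  simpa using mk_Iio_lt β

theorem exists_not_isMeagre_mk_eq_nonMeagerCard :
    ∃ S : Set (ℕ → ℕ), ¬ IsMeagre S ∧ Cardinal.mk S = nonMeagerCard :=
  csInf_mem (s := {c | ∃ S : Set (ℕ → ℕ), ¬ IsMeagre S ∧ Cardinal.mk S = c})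
    ⟨_, univ, not_isMeagre_of_isOpen isOpen_univ univ_nonempty, rfl⟩

/-- If `non(M) = ω₁` then there is an `IE`-Luzin set: a family
`{f_α : α < ω₁} ⊆ ω^ω` such that every `g : ω → ω` agrees infinitely often with
all but boundedly many members of the family. -/
theorem nonM_omega1_implies_IELuzin (h : nonMeagerCard = Cardinal.aleph 1) :
    ∃ F : (Cardinal.aleph 1).ord.ToType → ℕ → ℕ,
      ∀ g : ℕ → ℕ, ∃ α : (Cardinal.aleph 1).ord.ToType,
        ∀ β : (Cardinal.aleph 1).ord.ToType, α < β →
          {n : ℕ | F β n = g n}.Infinite := by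
  obtain ⟨S, hS, hcard⟩ := exists_not_isMeagre_mk_eq_nonMeagerCard
  obtain ⟨e⟩ : Nonempty ((Cardinal.aleph 1).ord.ToType ≃ S) :=
    Cardinal.lift_mk_eq'.mp (by simp [hcard, h])
  have hrange : range (fun α => (e α : ℕ → ℕ)) = S := by
    rw [← Function.comp_def, e.surjective.range_comp, Subtype.range_coe]
  obtain ⟨F, hF⟩ := exists_forall_le_infinite_eq_of_not_isMeagre_range _ (hrange ▸ hS)
    Cardinal.countable_Iic_aleph_one_ord_toType
  exact ⟨F, fun g => (hF g).imp fun α hα β hαβ => hα β hαβ.le⟩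
end
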